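/- Let N be an admissible algebra and π an admissible projection. Then for every k with 0 ≤ k ≤ ν(N), dim N_{[k]} + dim N^k = dim N + 1, where N_{[k]} = {x ∈ N : xN^k = 0} (with N_{[0]} = 0 and N^0-conventions as in the paper). Equivalently, the map c ↦ π∘M_c induces a linear isomorphism N_{[k]}/Ann(N) ≅ Hom(N/N^k, Ann(N)). -/

import Mathlib

/-- `pw F N k` is the characteristic ideal `N^k`. -/
def pw (F N : Type*) [Field F] [NonUnitalNonAssocRing N] [Module F N] : ℕ → Submodule F N
  | 0 => ⊤
  | 1 => ⊤
  | (k+2) => Submodule.span F {z : N | ∃ x : N, ∃ y ∈ pw F N (k+1), z = x * y}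

/-- The annihilator `Ann(N) = {x | x·N = 0}` of a commutative algebra `N`. -/
def annSub (F N : Type*) [Field F] [NonUnitalCommRing N] [Module F N]
    [SMulCommClass F N N] [IsScalarTower F N N] : Submodule F N where
  carrier := {x | ∀ y : N, x * y = 0}
  add_mem' := by intro a b ha hb y; simp [add_mul, ha y, hb y]
  zero_mem' := by intro y; simp
  smul_mem' := by intro c x hx y; rw [smul_mul_assoc, hx y, smul_zero]

/-- `annk F N k = N_{[k]}`: `N_{[0]} = 0` and `N_{[k]} = {x | x·N^k = 0}` for `k > 0`
(commutative case). -/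
def annk (F N : Type*) [Field F] [NonUnitalCommRing N] [Module F N]
    [SMulCommClass F N N] [IsScalarTower F N N] : ℕ → Submodule F N
  | 0 => ⊥
  | (k+1) =>
    { carrier := {x : N | ∀ y ∈ pw F N (k+1), x * y = 0}
      add_mem' := by intro a b ha hb y hy; simp [add_mul, ha y hy, hb y hy]
      zero_mem' := by intro y _; simp
      smul_mem' := by intro c x hx y hy; rw [smul_mul_assoc, hx y hy, smul_zero] }

/-!
Choose a functional `g` on `N` that is injective on the line `Ann(N)` and pair `N` with `N^k` by
`(b, y) ↦ g (b y)`. If `g (b N^j) = 0` for some `j ≥ 1`, then `b N^j = 0`: by descending induction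
on `i ≥ j`, once `b N^{i+1} = 0` the products `b y` with `y ∈ N^i` lie in `Ann(N)`, where `g` is
injective. So the left kernel of the pairing is `N_{[k]}` and its right kernel is
`N^k ∩ Ann(N) = Ann(N)`, as `Ann(N) = N^ν ⊆ N^k`. A pairing and its transpose have the same rank,
whence `dim N - dim N_{[k]} = dim N^k - 1`.
-/

open Module

theorem LinearMap.finrank_range_flip {K V W : Type*} [Field K] [AddCommGroup V] [Module K V]
    [AddCommGroup W] [Module K W] [FiniteDimensional K W] (B : V →ₗ[K] W →ₗ[K] K) :
    finrank K (LinearMap.range B.flip) = finrank K (LinearMap.range B) := by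
  have hB : B.flip = B.dualMap ∘ₗ Dual.eval K W := rfl
  rw [hB, LinearMap.range_comp, LinearMap.range_eq_top.2 (bijective_dual_eval K W).2,
    Submodule.map_top]
  exact B.finrank_range_dualMap_eq_finrank_range

theorem LinearMap.finrank_ker_add_finrank_eq_finrank_ker_flip_add_finrank {K V W : Type*}
    [Field K] [AddCommGroup V] [Module K V] [AddCommGroup W] [Module K W]
    [FiniteDimensional K V] [FiniteDimensional K W] (B : V →ₗ[K] W →ₗ[K] K) :
    finrank K (LinearMap.ker B) + finrank K W = finrank K (LinearMap.ker B.flip) + finrank K V := by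
  have hV := B.finrank_range_add_finrank_ker
  have hW := B.flip.finrank_range_add_finrank_ker
  have hdual : finrank K (Dual K W) = finrank K W := Subspace.dual_finrank_eq
  rw [B.finrank_range_flip] at hW
  omega

theorem Submodule.exists_dual_injOn_of_finrank_eq_one {K V : Type*} [Field K] [AddCommGroup V]
    [Module K V] (S : Submodule K V) (hS : finrank K S = 1) :
    ∃ g : Dual K V, ∀ x ∈ S, g x = 0 → x = 0 := by
  have : Module.Finite K S := Module.finite_of_finrank_eq_succ hS
  let e : S ≃ₗ[K] K := LinearEquiv.ofFinrankEq S K (by simp [hS])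
  obtain ⟨g, hg⟩ := LinearMap.exists_extend e.toLinearMap
  refine ⟨g, fun x hx hgx => ?_⟩
  have he : e ⟨x, hx⟩ = 0 := by rw [← hgx]; exact (LinearMap.congr_fun hg ⟨x, hx⟩).symm
  simpa using e.map_eq_zero_iff.1 he

section Powers

variable {F N : Type*} [Field F] [NonUnitalNonAssocRing N] [Module F N]

theorem pw_succ_le (m : ℕ) : pw F N (m + 1) ≤ pw F N m := by
  induction m with
  | zero => exact le_rfl
  | succ j ih =>
    refine Submodule.span_le.2 ?_
    rintro z ⟨x, y, hy, rfl⟩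
    cases j with
    | zero => exact Submodule.mem_top
    | succ i => exact Submodule.subset_span ⟨x, y, ih hy, rfl⟩

theorem pw_antitone : Antitone (pw F N) :=
  antitone_nat_of_succ_le pw_succ_le

theorem mul_mem_pw_succ (x : N) {y : N} {j : ℕ} (hj : 1 ≤ j) (hy : y ∈ pw F N j) :
    x * y ∈ pw F N (j + 1) := by
  obtain ⟨p, rfl⟩ : ∃ p, j = p + 1 := ⟨j - 1, by omega⟩
  exact Submodule.subset_span ⟨x, y, hy, rfl⟩

end Powers

section Annihilators

variable {F N : Type*} [Field F] [NonUnitalCommRing N] [Module F N]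
  [SMulCommClass F N N] [IsScalarTower F N N]

theorem pw_le_annSub {n : ℕ} (hn : 1 ≤ n) (hnil : pw F N (n + 1) = ⊥) :
    pw F N n ≤ annSub F N := by
  intro x hx y
  have hyx : y * x ∈ pw F N (n + 1) := mul_mem_pw_succ y hn hx
  rw [hnil] at hyx
  rw [mul_comm]
  exact (Submodule.mem_bot F).1 hyx

theorem pw_eq_annSub [FiniteDimensional F N] (hAnn : finrank F (annSub F N) = 1) {n : ℕ}
    (hn : 1 ≤ n) (hnil : pw F N (n + 1) = ⊥) (hne : pw F N n ≠ ⊥) :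
    pw F N n = annSub F N := by
  refine Submodule.eq_of_le_of_finrank_le (pw_le_annSub hn hnil) ?_
  rw [hAnn, Nat.one_le_iff_ne_zero]
  exact fun h => hne (Submodule.finrank_eq_zero.1 h)

theorem mul_mem_annSub_of_mul_pw_succ_eq_zero {b : N} {j : ℕ} (hj : 1 ≤ j)
    (hb : ∀ y ∈ pw F N (j + 1), b * y = 0) {z : N} (hz : z ∈ pw F N j) :
    b * z ∈ annSub F N := by
  intro w
  rw [mul_assoc, mul_comm z]
  exact hb _ (mul_mem_pw_succ w hj hz)

theorem mul_pw_eq_zero_of_map_mul_pw_eq_zero {V : Type*} [AddCommGroup V] [Module F V]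
    (φ : N →ₗ[F] V) (hφ : ∀ x ∈ annSub F N, φ x = 0 → x = 0) {n : ℕ} (hnil : pw F N n = ⊥)
    {m : ℕ} (hm : 1 ≤ m) {b : N} (hb : ∀ y ∈ pw F N m, φ (b * y) = 0) :
    ∀ y ∈ pw F N m, b * y = 0 := by
  have top : ∀ y ∈ pw F N (max n m), b * y = 0 := fun y hy => by
    have hy0 : y ∈ pw F N n := pw_antitone (le_max_left n m) hy
    rw [hnil, Submodule.mem_bot] at hy0
    rw [hy0, mul_zero]
  have step : ∀ j, m ≤ j → (∀ y ∈ pw F N (j + 1), b * y = 0) → ∀ y ∈ pw F N j, b * y = 0 :=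
    fun j hj hsucc y hy =>
      hφ _ (mul_mem_annSub_of_mul_pw_succ_eq_zero (hm.trans hj) hsucc hy)
        (hb y (pw_antitone hj hy))
  exact Nat.decreasingInduction (motive := fun j _ => m ≤ j → ∀ y ∈ pw F N j, b * y = 0)
    (fun j _ ih hj => step j hj (ih (by omega))) (fun _ => top) (le_max_right n m) le_rfl

def mulPairing (g : Dual F N) (k : ℕ) : N →ₗ[F] Dual F (pw F N k) :=
  ((LinearMap.mul F N).compr₂ g).compl₂ (pw F N k).subtype

theorem ker_mulPairing {g : Dual F N} (hg : ∀ x ∈ annSub F N, g x = 0 → x = 0) {n : ℕ}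
    (hnil : pw F N n = ⊥) (k : ℕ) :
    LinearMap.ker (mulPairing g (k + 1)) = annk F N (k + 1) := by
  ext b
  refine ⟨fun hb => ?_, fun hb => LinearMap.ext fun y => by simp [mulPairing, hb y y.2]⟩
  refine mul_pw_eq_zero_of_map_mul_pw_eq_zero g hg hnil (Nat.le_add_left 1 k) fun y hy => ?_
  exact LinearMap.congr_fun hb ⟨y, hy⟩

theorem ker_mulPairing_flip {g : Dual F N} (hg : ∀ x ∈ annSub F N, g x = 0 → x = 0) {n : ℕ}
    (hnil : pw F N n = ⊥) (k : ℕ) :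
    LinearMap.ker (mulPairing g k).flip = (annSub F N).comap (pw F N k).subtype := by
  ext y
  refine ⟨fun hy w => ?_, fun hy => LinearMap.ext fun b => ?_⟩
  · refine mul_pw_eq_zero_of_map_mul_pw_eq_zero g hg hnil le_rfl (fun x _ => ?_) w
      Submodule.mem_top
    rw [mul_comm]
    exact LinearMap.congr_fun hy x
  · simp [mulPairing, mul_comm b, show (y : N) * b = 0 from hy b]

end Annihilators

theorem stmt18_general {F N : Type*} [Field F] [NonUnitalCommRing N] [Module F N]
    [SMulCommClass F N N] [IsScalarTower F N N] [FiniteDimensional F N]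
    (hAnn : Module.finrank F (annSub F N) = 1)
    (ν : ℕ) (hnil : pw F N (ν + 1) = ⊥) (hne : pw F N ν ≠ ⊥) :
    ∀ k : ℕ, k ≤ ν →
      Module.finrank F (annk F N k)
          + (if k = 0 then Module.finrank F N + 1 else Module.finrank F (pw F N k))
        = Module.finrank F N + 1 := by
  rintro (_ | k) hk
  · rw [if_pos rfl, show annk F N 0 = ⊥ from rfl, finrank_bot, zero_add]
  obtain ⟨g, hg⟩ := (annSub F N).exists_dual_injOn_of_finrank_eq_one hAnn
  have hAnn_le : annSub F N ≤ pw F N (k + 1) :=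
    pw_eq_annSub hAnn (by omega) hnil hne ▸ pw_antitone hk
  have hdim := (mulPairing g (k + 1)).finrank_ker_add_finrank_eq_finrank_ker_flip_add_finrank
  rw [ker_mulPairing hg hnil, ker_mulPairing_flip hg hnil,
    (Submodule.comapSubtypeEquivOfLe hAnn_le).finrank_eq, hAnn] at hdim
  rw [if_neg k.succ_ne_zero]
  omega

/-- For an admissible algebra `N` of nil-index `ν`:
`dim N_{[k]} + dim N^k = dim N + 1` for all `0 ≤ k ≤ ν`, where for `k = 0` the paper's
convention `N^0 = F·1 ⊕ N` (the unital extension, of dimension `dim N + 1`) is used. -/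
theorem stmt18 {F N : Type*} [Field F] [CharZero F] [NonUnitalCommRing N] [Module F N]
    [SMulCommClass F N N] [IsScalarTower F N N] [FiniteDimensional F N]
    (hAnn : Module.finrank F (annSub F N) = 1)
    (ν : ℕ) (hnil : pw F N (ν + 1) = ⊥) (hne : pw F N ν ≠ ⊥)
    (π : N →ₗ[F] N) (hproj : π ∘ₗ π = π) (hrange : LinearMap.range π = annSub F N) :
    ∀ k : ℕ, k ≤ ν →
      Module.finrank F (annk F N k)
          + (if k = 0 then Module.finrank F N + 1 else Module.finrank F (pw F N k))
        = Module.finrank F N + 1 :=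
  stmt18_general hAnn ν hnil hne
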